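/- Let λ be an n-partition, T a semistandard tableau of shape λ, and (l,k) a box of λ. Then for each column index j with 1 ≤ j ≤ l, there is exactly one row index i ∈ [1, ζ_j] such that the box (l,k) lies on the scanning path P(T;j,i). -/
import Mathlib


/-
Common combinatorial set-up for "Tableaux for Key Polynomials, Demazure
Characters, and Atoms" (Proctor–Willis).

Conventions: a box `(j, i)` means column `j`, row `i`, both 1-indexed.
Partial (remnant) tableaux are encoded by their column-length functions
`c : ℕ → ℕ` (each column of a remnant is a top segment of the original
column), together with the ambient value function `T : ℕ → ℕ → ℕ`.
-/

open scoped BigOperators Classical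

noncomputable section

namespace KeyPoly

open MvPolynomial

/-- An `n`-partition `λ = (λ_1, …, λ_n)` with `λ_1 ≥ … ≥ λ_n ≥ 0`,
recorded as a function on `1, …, n`, vanishing beyond `n`. -/
structure NPartition (n : ℕ) where
  part : ℕ → ℕ
  antitone : ∀ ⦃i j : ℕ⦄, 1 ≤ i → i ≤ j → part j ≤ part i
  outside : ∀ i : ℕ, n < i → part i = 0

variable {n : ℕ}

/-- The column length `ζ_j` of the Young diagram of `λ`. -/
def zeta (lam : NPartition n) (j : ℕ) : ℕ :=
  ((Finset.Icc 1 n).filter fun i => j ≤ lam.part i).card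

/-- The box `(j,i)` (column `j`, row `i`) belongs to the diagram of `λ`. -/
def InShape (lam : NPartition n) (j i : ℕ) : Prop :=
  1 ≤ j ∧ 1 ≤ i ∧ i ≤ n ∧ j ≤ lam.part i

/-- The boxes of the diagram of `λ`, as a finite set of pairs (column, row). -/
def boxes (lam : NPartition n) : Finset (ℕ × ℕ) :=
  (Finset.Icc 1 (lam.part 1) ×ˢ Finset.Icc 1 n).filter fun b => b.1 ≤ lam.part b.2

/-- `T` is a semistandard tableau of shape `λ` with values in `[1,n]`:
rows weakly increase eastward, columns strictly increase southward. -/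
def IsSSYT (lam : NPartition n) (T : ℕ → ℕ → ℕ) : Prop :=
  (∀ j i, InShape lam j i → 1 ≤ T j i ∧ T j i ≤ n) ∧
  (∀ j i, InShape lam (j + 1) i → T j i ≤ T (j + 1) i) ∧
  (∀ j i, InShape lam j (i + 1) → T j i < T j (i + 1))

/-- Normalization: the filling vanishes outside the shape. -/
def ZeroOutside (lam : NPartition n) (T : ℕ → ℕ → ℕ) : Prop :=
  ∀ j i, ¬ InShape lam j i → T j i = 0

/-- `T(l, k+1)`, with the boundary convention `n+1` when `k = ζ_l`. -/
def south (lam : NPartition n) (T : ℕ → ℕ → ℕ) (l k : ℕ) : ℕ :=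
  if InShape lam l (k + 1) then T l (k + 1) else n + 1

/-- `T(l+1, k)`, with the boundary convention `n` when `l = λ_k`. -/
def east (lam : NPartition n) (T : ℕ → ℕ → ℕ) (l k : ℕ) : ℕ :=
  if InShape lam (l + 1) k then T (l + 1) k else n

/-- An `n`-permutation: a tuple `(p 1, …, p n)` of distinct entries from `[1,n]`. -/
def IsNPerm (n : ℕ) (p : ℕ → ℕ) : Prop :=
  Set.BijOn p (Set.Icc 1 n) (Set.Icc 1 n)

/-- The `λ`-key `Y_λ(π)`: column `j` is `π_1, …, π_{ζ_j}` sorted increasingly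
(from top to bottom); zero outside the shape. -/
def keyTab (lam : NPartition n) (p : ℕ → ℕ) (j i : ℕ) : ℕ :=
  if InShape lam j i then
    (((Finset.Icc 1 (zeta lam j)).image p).sort (· ≤ ·)).getD (i - 1) 0
  else 0

/-- A semistandard `T` is a key if the values of each column contain the
values of every column to its east. -/
def colSet (lam : NPartition n) (T : ℕ → ℕ → ℕ) (j : ℕ) : Finset ℕ :=
  (Finset.Icc 1 (zeta lam j)).image (T j)

def IsKey (lam : NPartition n) (T : ℕ → ℕ → ℕ) : Prop :=
  ∀ j j' : ℕ, 1 ≤ j → j ≤ j' → j' ≤ lam.part 1 → colSet lam T j' ⊆ colSet lam T j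

/-! ### The (right) scanning method -/

/-- The next column of the scanning path: the earliest column `h' > h`
(up to `maxCol`) whose column bottom in the remnant `c` is nonempty and has
value weakly larger than the bottom value of column `h`. -/
def nextCol (T : ℕ → ℕ → ℕ) (c : ℕ → ℕ) (maxCol h : ℕ) : Option ℕ :=
  (List.range' (h + 1) (maxCol - h)).find?
    (fun h' => decide (0 < c h' ∧ T h (c h) ≤ T h' (c h')))

/-- Columns of the scanning path (EWIS of column bottoms) starting at column `h`,
with explicit fuel. -/
def pathColsAux (T : ℕ → ℕ → ℕ) (c : ℕ → ℕ) (maxCol : ℕ) : ℕ → ℕ → List ℕ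
  | 0, h => [h]
  | fuel + 1, h =>
    match nextCol T c maxCol h with
    | none => [h]
    | some h' => h :: pathColsAux T c maxCol fuel h'

/-- Columns of the scanning path starting at the bottom of column `j` of the
remnant with column lengths `c`. -/
def pathCols (T : ℕ → ℕ → ℕ) (c : ℕ → ℕ) (maxCol j : ℕ) : List ℕ :=
  pathColsAux T c maxCol maxCol j

/-- Remove the scanning path starting in column `j` from the remnant `c`. -/
def removePath (T : ℕ → ℕ → ℕ) (c : ℕ → ℕ) (maxCol j : ℕ) : ℕ → ℕ :=
  fun h => if h ∈ pathCols T c maxCol j then c h - 1 else c h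

/-- Iterate path removal `r` times, always starting from column `j`. -/
def remnantIter (T : ℕ → ℕ → ℕ) (c0 : ℕ → ℕ) (maxCol j : ℕ) : ℕ → ℕ → ℕ
  | 0 => c0
  | r + 1 => removePath T (remnantIter T c0 maxCol j r) maxCol j

/-- Column lengths of the remnant tableau `T^{(j;i)}`. -/
def remnant (lam : NPartition n) (T : ℕ → ℕ → ℕ) (j i : ℕ) : ℕ → ℕ :=
  remnantIter T (zeta lam) (lam.part 1) j (zeta lam j - i)

/-- The scanning path `P(T; j, i)`, recorded by its list of columns. -/
def scanPath (lam : NPartition n) (T : ℕ → ℕ → ℕ) (j i : ℕ) : List ℕ :=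
  pathCols T (remnant lam T j i) (lam.part 1) j

/-- The scanning value `S(T; j, i)`: the last value of the EWIS from `(j,i)`. -/
def scanValue (lam : NPartition n) (T : ℕ → ℕ → ℕ) (j i : ℕ) : ℕ :=
  T ((scanPath lam T j i).getLastD j)
    (remnant lam T j i ((scanPath lam T j i).getLastD j))

/-- The box `(l,k)` lies on the scanning path `P(T; j, i)`. -/
def InScanPath (lam : NPartition n) (T : ℕ → ℕ → ℕ) (j i l k : ℕ) : Prop :=
  l ∈ scanPath lam T j i ∧ k = remnant lam T j i l

/-- `m(U)` where `U` is the remnant with column lengths `c` restricted to the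
columns `l+1, …, maxCol`:  the maximum of the column-bottom values, with the
convention `m((())) = 1` for the empty tableau. -/
def mEast (T : ℕ → ℕ → ℕ) (c : ℕ → ℕ) (maxCol l : ℕ) : ℕ :=
  max 1 (((Finset.Icc (l + 1) maxCol).filter fun h => 0 < c h).sup fun h => T h (c h))

/-! ### The condition sets A, C, and B -/

/-- The set `A_λ(T, π; l, k)`. -/
def Aset (lam : NPartition n) (T : ℕ → ℕ → ℕ) (p : ℕ → ℕ) (l k : ℕ) : Set ℕ :=
  if keyTab lam p l k < mEast T (remnant lam T l k) (lam.part 1) l then (∅ : Set ℕ)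
  else Set.Icc k (min (keyTab lam p l k) (min (south lam T l k - 1) (east lam T l k)))

/-- The set `C_λ(T, π; l, k)`. -/
def Cset (lam : NPartition n) (T : ℕ → ℕ → ℕ) (p : ℕ → ℕ) (l k : ℕ) : Set ℕ :=
  if l = lam.part 1 then {keyTab lam p l k}
  else if keyTab lam p l k < mEast T (remnant lam T l k) (lam.part 1) l then (∅ : Set ℕ)
  else if mEast T (remnant lam T l k) (lam.part 1) l = keyTab lam p l k then
    Set.Icc k (min (keyTab lam p l k) (min (south lam T l k - 1) (east lam T l k)))
  else {keyTab lam p l k} ∩ Set.Icc k (min (south lam T l k - 1) (east lam T l k))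

/-- The row index `a(l,k;j)`:  the `i` with `(l-1,k) ∈ P(T;j,i)`
(convention `a(l,k;l) = k`). -/
def aIdx (lam : NPartition n) (T : ℕ → ℕ → ℕ) (l k j : ℕ) : ℕ :=
  if j = l then k
  else ((Finset.Icc 1 (zeta lam j)).filter fun i => InScanPath lam T j i (l - 1) k).sup id

/-- The row index `b(l,k;j)`:  the `i` with `(l,k+1) ∈ P(T;j,i)` when `k < ζ_l`,
and `ζ_j + 1` when `k = ζ_l` (convention `b(l,k;l) = k+1`). -/
def bIdx (lam : NPartition n) (T : ℕ → ℕ → ℕ) (l k j : ℕ) : ℕ :=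
  if j = l then k + 1
  else if k = zeta lam l then zeta lam j + 1
  else ((Finset.Icc 1 (zeta lam j)).filter fun i => InScanPath lam T j i l (k + 1)).sup id

/-- `E(l,k;j,i)`:  the value of `T` at the box `(h,m)` of `P(T;j,i)` with `h < l`
maximal (convention `E(l,k;l,k) = k`). -/
def Epath (lam : NPartition n) (T : ℕ → ℕ → ℕ) (l k j i : ℕ) : ℕ :=
  if j = l then k
  else
    T (((scanPath lam T j i).filter fun h => decide (h < l)).foldr max 0)
      (remnant lam T j i (((scanPath lam T j i).filter fun h => decide (h < l)).foldr max 0))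

/-- The set `B_λ(T, π; l, k) = ⋂_{j=1}^{l} ⋃_{i=a(j)}^{b(j)-1} [E(l,k;j,i), Y_λ(π)(j,i)]`. -/
def Bset (lam : NPartition n) (T : ℕ → ℕ → ℕ) (p : ℕ → ℕ) (l k : ℕ) : Set ℕ :=
  {v | ∀ j, 1 ≤ j → j ≤ l →
    ∃ i, aIdx lam T l k j ≤ i ∧ i + 1 ≤ bIdx lam T l k j ∧
      Epath lam T l k j i ≤ v ∧ v ≤ keyTab lam p j i}

/-! ### The left scanning method -/

/-- The largest row `r ≤ c j` of column `j` whose value is at most `x`. -/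
def maxRow (T : ℕ → ℕ → ℕ) (c : ℕ → ℕ) (j x : ℕ) : ℕ :=
  ((Finset.Icc 1 (c j)).filter fun r => T j r ≤ x).sup id

/-- The rows of the maximizing weakly decreasing sequence through columns
`j, j-1, …, 1` with initial bound `x`, in a remnant with column lengths `c`. -/
def leftRows (T : ℕ → ℕ → ℕ) (c : ℕ → ℕ) : ℕ → ℕ → List ℕ
  | 0, _ => []
  | j + 1, x => maxRow T c (j + 1) x :: leftRows T c j (T (j + 1) (maxRow T c (j + 1) x))

/-- The column-1 value at the end of the left scanning path originating at `(j, r)`. -/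
def leftEndVal (T : ℕ → ℕ → ℕ) (c : ℕ → ℕ) (j r : ℕ) : ℕ :=
  T 1 ((leftRows T c j (T j r)).getLastD 0)

/-- Remove the left scanning path originating at `(l, c l)`, together with
all values beneath it, from the remnant `c`. -/
def leftRemovePath (T : ℕ → ℕ → ℕ) (c : ℕ → ℕ) (l : ℕ) : ℕ → ℕ :=
  fun j =>
    if 1 ≤ j ∧ j ≤ l then (leftRows T c l (T l (c l))).getD (l - j) 0 - 1 else c j

/-- Iterate left-path removal `r` times (always for column `l`). -/
def leftRemnantIter (T : ℕ → ℕ → ℕ) (c0 : ℕ → ℕ) (l : ℕ) : ℕ → ℕ → ℕ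
  | 0 => c0
  | r + 1 => leftRemovePath T (leftRemnantIter T c0 l r) l

/-- Column lengths of the left remnant used to compute `M(T; l, i)`:
`T` restricted to its first `l` columns with the left scanning paths
originating at `(l, ζ_l), …, (l, i+1)` (and everything beneath them) removed. -/
def leftRemnant (lam : NPartition n) (T : ℕ → ℕ → ℕ) (l i : ℕ) : ℕ → ℕ :=
  leftRemnantIter T (zeta lam) l (zeta lam l - i)

/-- The left scanning value `M(T; l, i)`. -/
def leftScanValue (lam : NPartition n) (T : ℕ → ℕ → ℕ) (l i : ℕ) : ℕ :=
  leftEndVal T (leftRemnant lam T l i) l i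

/-! ### The condition sets F and G -/

/-- The set `F_λ(T, σ; l, k)`. -/
def Fset (lam : NPartition n) (T : ℕ → ℕ → ℕ) (sg : ℕ → ℕ) (l k : ℕ) : Set ℕ :=
  if l = 1 then Set.Icc (keyTab lam sg 1 k) (south lam T 1 k - 1)
  else
    let U := leftRemnant lam T l k
    let q := maxRow T U (l - 1) (south lam T l k - 1)
    let P := (Finset.Icc 1 q).filter fun h => keyTab lam sg l k ≤ leftEndVal T U (l - 1) h
    if hP : P.Nonempty then Set.Icc (T (l - 1) (P.min' hP)) (south lam T l k - 1)
    else (∅ : Set ℕ)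

/-- The set `G_λ(T, σ; l, k)`. -/
def Gset (lam : NPartition n) (T : ℕ → ℕ → ℕ) (sg : ℕ → ℕ) (l k : ℕ) : Set ℕ :=
  if l = 1 then {keyTab lam sg 1 k}
  else
    let U := leftRemnant lam T l k
    let q := maxRow T U (l - 1) (south lam T l k - 1)
    let P := (Finset.Icc 1 q).filter fun h => leftEndVal T U (l - 1) h = keyTab lam sg l k
    if hP : P.Nonempty then
      Set.Icc (T (l - 1) (P.min' hP))
        (min ((if P.max' hP + 1 ≤ U (l - 1) then T (l - 1) (P.max' hP + 1) else n + 1) - 1)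
          (south lam T l k - 1))
    else (∅ : Set ℕ)

/-! ### Polynomials, divided differences, words -/

/-- Polynomials in the variables `X 1, …, X n` (indexed by `ℕ`) over `ℚ`. -/
abbrev Poly : Type := MvPolynomial ℕ ℚ

/-- The action of `s_i` on polynomials: interchange `x_i` and `x_{i+1}`. -/
def sOp (i : ℕ) (P : Poly) : Poly := rename (Equiv.swap i (i + 1)) P

/-- The divided difference operator
`ρ_i = (x_i - x_{i+1})⁻¹ ∘ (1 - s_i) ∘ x_i`, defined as the unique polynomial
`Q` with `(x_i - x_{i+1}) Q = x_i P - s_i (x_i P)`. -/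
def rhoOp (i : ℕ) (P : Poly) : Poly :=
  if h : ∃ Q : Poly, (X i - X (i + 1)) * Q = X i * P - sOp i (X i * P) then h.choose
  else 0

/-- The operator `ρ̄_i := ρ_i - 1`. -/
def rhoBarOp (i : ℕ) (P : Poly) : Poly := rhoOp i P - P

/-- Apply operators indexed by a word `[i_t, …, i_1]`, rightmost first:
`applyOps f [i_t, …, i_1] P = f i_t (⋯ (f i_1 P))`. -/
def applyOps (f : ℕ → Poly → Poly) : List ℕ → Poly → Poly
  | [], P => P
  | i :: w, P => f i (applyOps f w P)

/-- The monomial `x_1^{λ_1} ⋯ x_n^{λ_n}`. -/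
def lamMonomial (lam : NPartition n) : Poly :=
  ∏ i ∈ Finset.Icc 1 n, X i ^ lam.part i

/-- The weight monomial `x^T = ∏ x_i^{c_i}` of the filling `T`. -/
def weight (lam : NPartition n) (T : ℕ → ℕ → ℕ) : Poly :=
  ∏ b ∈ boxes lam, X (T b.1 b.2)

/-- The simple reflection `s_i` acting by value. -/
def swapVal (i v : ℕ) : ℕ := if v = i then i + 1 else if v = i + 1 then i else v

/-- The permutation `s_{i_t} ⋯ s_{i_1}.(1, 2, …, n)` obtained by applying the
word `w = [i_t, …, i_1]` (rightmost letter first, each acting by value) to the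
identity. -/
def permOfWord (w : List ℕ) : ℕ → ℕ := w.foldr (fun i f => swapVal i ∘ f) id

/-- `w` is a word in letters `s_1, …, s_{n-1}` producing `π` from `(1, …, n)`. -/
def WordFor (n : ℕ) (w : List ℕ) (p : ℕ → ℕ) : Prop :=
  (∀ i ∈ w, 1 ≤ i ∧ i + 1 ≤ n) ∧ ∀ t, 1 ≤ t → t ≤ n → permOfWord w t = p t

/-- `w` is a reduced word for `π`: it produces `π` with minimal length. -/
def IsReducedWord (n : ℕ) (w : List ℕ) (p : ℕ → ℕ) : Prop :=
  WordFor n w p ∧ ∀ w' : List ℕ, WordFor n w' p → w.length ≤ w'.length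

/-- The atom `c_λ(π;x) = ρ̄_{i_t} ⋯ ρ̄_{i_1} . x_1^{λ_1} ⋯ x_n^{λ_n}`, computed
from a choice of reduced word for `π` (it is independent of this choice). -/
def atomPoly (lam : NPartition n) (p : ℕ → ℕ) : Poly :=
  if h : ∃ w : List ℕ, IsReducedWord n w p then
    applyOps rhoBarOp h.choose (lamMonomial lam)
  else 0

/-! ### `S_n^λ` -/

/-- The set `Q_λ` of distinct column lengths of `λ`. -/
def Qset (lam : NPartition n) : Finset ℕ := (Finset.Icc 1 (lam.part 1)).image (zeta lam)

/-- `π ∈ S_n^λ`: an `n`-permutation increasing on each block `[q_{r-1}+1, q_r]`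
cut out by the column lengths of `λ` (equivalently, `π_i < π_j` whenever
`i < j` and no element of `Q_λ` lies in `[i, j)`). -/
def InSnLam (lam : NPartition n) (p : ℕ → ℕ) : Prop :=
  IsNPerm n p ∧ ∀ i j, 1 ≤ i → i < j → j ≤ n →
    (∀ q ∈ Qset lam, q < i ∨ j ≤ q) → p i < p j

end KeyPoly

namespace KeyPoly

/-! ### Auxiliary lemmas for Statement 18 -/

section Aux

variable {n : ℕ}

lemma zeta_le_n (lam : NPartition n) (m : ℕ) : zeta lam m ≤ n := by
  have h : ((Finset.Icc 1 n).filter fun i => m ≤ lam.part i).card ≤ (Finset.Icc 1 n).card :=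
    Finset.card_filter_le _ _
  simpa [zeta, Nat.card_Icc] using h

lemma zeta_antitone (lam : NPartition n) {a b : ℕ} (h : a ≤ b) : zeta lam b ≤ zeta lam a := by
  apply Finset.card_le_card
  intro x hx
  simp only [Finset.mem_filter] at hx ⊢
  exact ⟨hx.1, le_trans h hx.2⟩

lemma le_zeta_of_inShape (lam : NPartition n) {m row : ℕ} (h : InShape lam m row) :
    row ≤ zeta lam m := by
  obtain ⟨-, h1, h2, h3⟩ := h
  have hsub : Finset.Icc 1 row ⊆ (Finset.Icc 1 n).filter fun i => m ≤ lam.part i := by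
    intro x hx
    simp only [Finset.mem_Icc] at hx
    simp only [Finset.mem_filter, Finset.mem_Icc]
    exact ⟨⟨hx.1, le_trans hx.2 h2⟩, le_trans h3 (lam.antitone hx.1 hx.2)⟩
  have := Finset.card_le_card hsub
  simpa [zeta, Nat.card_Icc] using this

lemma inShape_of_le_zeta (lam : NPartition n) {m row : ℕ} (hm : 1 ≤ m) (h1 : 1 ≤ row)
    (h : row ≤ zeta lam m) : InShape lam m row := by
  refine ⟨hm, h1, le_trans h (zeta_le_n lam m), ?_⟩
  by_contra hc
  push_neg at hc
  have hsub : ((Finset.Icc 1 n).filter fun i => m ≤ lam.part i) ⊆ Finset.Icc 1 (row - 1) := by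
    intro x hx
    simp only [Finset.mem_filter, Finset.mem_Icc] at hx
    simp only [Finset.mem_Icc]
    refine ⟨hx.1.1, ?_⟩
    by_contra hx2
    push_neg at hx2
    have : lam.part x ≤ lam.part row := lam.antitone h1 (by omega)
    omega
  have := Finset.card_le_card hsub
  rw [Nat.card_Icc] at this
  have : zeta lam m ≤ row - 1 := by simpa [zeta] using this
  omega

lemma zeta_pos_le_part1 (lam : NPartition n) {m : ℕ} (h : 0 < zeta lam m) :
    m ≤ lam.part 1 := by
  have : ((Finset.Icc 1 n).filter fun i => m ≤ lam.part i).Nonempty := by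
    rw [← Finset.card_pos]; exact h
  obtain ⟨x, hx⟩ := this
  simp only [Finset.mem_filter, Finset.mem_Icc] at hx
  exact le_trans hx.2 (lam.antitone le_rfl hx.1.1)

lemma self_mem_pathColsAux (T : ℕ → ℕ → ℕ) (c : ℕ → ℕ) (M : ℕ) :
    ∀ fuel h, h ∈ pathColsAux T c M fuel h := by
  intro fuel h
  cases fuel with
  | zero => simp [pathColsAux]
  | succ f =>
    rcases hg : nextCol T c M h with _ | g <;> simp [pathColsAux, hg]

lemma nextCol_some (T : ℕ → ℕ → ℕ) (c : ℕ → ℕ) {M h g : ℕ}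
    (hg : nextCol T c M h = some g) :
    h < g ∧ g ≤ M ∧ 0 < c g ∧ T h (c h) ≤ T g (c g) := by
  unfold nextCol at hg
  have hmem := List.mem_of_find?_eq_some hg
  have hpred := List.find?_some hg
  rw [List.mem_range'_1] at hmem
  simp only [decide_eq_true_eq] at hpred
  exact ⟨by omega, by omega, hpred.1, hpred.2⟩

lemma le_of_mem_pathColsAux (T : ℕ → ℕ → ℕ) (c : ℕ → ℕ) (M : ℕ) :
    ∀ fuel h0 h, h ∈ pathColsAux T c M fuel h0 → h0 ≤ h := by
  intro fuel
  induction fuel with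
  | zero =>
    intro h0 h hh
    simp [pathColsAux] at hh
    omega
  | succ f ih =>
    intro h0 h hh
    rcases hg : nextCol T c M h0 with _ | g
    · simp [pathColsAux, hg] at hh; omega
    · simp only [pathColsAux, hg, List.mem_cons] at hh
      rcases hh with rfl | hh
      · exact le_rfl
      · have h1 := ih g h hh
        have h2 := (nextCol_some T c hg).1
        omega

lemma next_mem_pathColsAux (T : ℕ → ℕ → ℕ) (c : ℕ → ℕ) (M : ℕ) :
    ∀ fuel h0, M ≤ h0 + fuel →
      ∀ h g, h ∈ pathColsAux T c M fuel h0 → nextCol T c M h = some g →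
        g ∈ pathColsAux T c M fuel h0 := by
  intro fuel
  induction fuel with
  | zero =>
    intro h0 hM h g hh hg
    simp [pathColsAux] at hh
    subst hh
    unfold nextCol at hg
    have h0' : M - h = 0 := by omega
    rw [h0'] at hg
    simp at hg
  | succ f ih =>
    intro h0 hM h g hh hg
    rcases hg0 : nextCol T c M h0 with _ | g0
    · simp only [pathColsAux, hg0, List.mem_singleton] at hh
      subst hh
      rw [hg0] at hg
      cases hg
    · simp only [pathColsAux, hg0, List.mem_cons] at hh ⊢
      rcases hh with rfl | hh
      · rw [hg0] at hg
        injection hg with hg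
        subst hg
        exact Or.inr (self_mem_pathColsAux T c M f g0)
      · have hlt := (nextCol_some T c hg0).1
        exact Or.inr (ih g0 (by omega) h g hh hg)

lemma nextCol_eq_some_succ (T : ℕ → ℕ → ℕ) (c : ℕ → ℕ) {M h : ℕ} (hM : h < M)
    (h1 : 0 < c (h + 1)) (h2 : T h (c h) ≤ T (h + 1) (c (h + 1))) :
    nextCol T c M h = some (h + 1) := by
  unfold nextCol
  obtain ⟨m, hm⟩ : ∃ m, M - h = m + 1 := ⟨M - h - 1, by omega⟩
  rw [hm, List.range'_succ, List.find?_cons_of_pos]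
  simp only [decide_eq_true_eq]
  exact ⟨h1, h2⟩

/-- The walk lemma: if the remnant column lengths are weakly decreasing east of
`j` and the path visits a column `h`, then it visits every column `h' ≥ h`
whose remnant length equals (and is positive) that of `h`. -/
lemma walk_mem_pathCols (lam : NPartition n) (T : ℕ → ℕ → ℕ) (hT : IsSSYT lam T)
    (c : ℕ → ℕ) (j : ℕ)
    (hMon : ∀ a b, j ≤ a → a ≤ b → c b ≤ c a)
    (hCle : ∀ a, c a ≤ zeta lam a) :
    ∀ d h, h ∈ pathCols T c (lam.part 1) j → c (h + d) = c h → 0 < c (h + d) →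
      (h + d) ∈ pathCols T c (lam.part 1) j := by
  intro d
  induction d with
  | zero => intro h hmem _ _; exact hmem
  | succ d ih =>
    intro h hmem heq hpos
    have he : h + (d + 1) = h + d + 1 := rfl
    rw [he] at heq hpos
    have hjh : j ≤ h := le_of_mem_pathColsAux T c (lam.part 1) _ j h hmem
    have hc1 : c (h + 1) = c h := by
      have u1 : c (h + 1) ≤ c h := hMon h (h + 1) hjh (by omega)
      have u2 : c (h + d + 1) ≤ c (h + 1) := hMon (h + 1) (h + d + 1) (by omega) (by omega)
      omega
    have hpos1 : 0 < c (h + 1) := by omega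
    have hM : h + 1 ≤ lam.part 1 := by
      have hz : 0 < zeta lam (h + d + 1) := by
        have := hCle (h + d + 1)
        omega
      have := zeta_pos_le_part1 lam hz
      omega
    have hshape : InShape lam (h + 1) (c h) := by
      apply inShape_of_le_zeta lam (by omega) (by omega)
      rw [← hc1]
      exact hCle (h + 1)
    have hrow : T h (c h) ≤ T (h + 1) (c (h + 1)) := by
      rw [hc1]
      exact hT.2.1 h (c h) hshape
    have hnext : nextCol T c (lam.part 1) h = some (h + 1) :=
      nextCol_eq_some_succ T c (by omega) hpos1 hrow
    have hmem1 : (h + 1) ∈ pathCols T c (lam.part 1) j :=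
      next_mem_pathColsAux T c (lam.part 1) (lam.part 1) j (by omega) h (h + 1) hmem hnext
    have hre : h + (d + 1) = (h + 1) + d := by omega
    rw [he, show h + d + 1 = (h + 1) + d by omega]
    apply ih (h + 1) hmem1
    · rw [show (h + 1) + d = h + d + 1 by omega, heq, hc1]
    · rw [show (h + 1) + d = h + d + 1 by omega]; exact hpos

lemma mon_removePath (lam : NPartition n) (T : ℕ → ℕ → ℕ) (hT : IsSSYT lam T)
    (c : ℕ → ℕ) (j : ℕ)
    (hMon : ∀ a b, j ≤ a → a ≤ b → c b ≤ c a)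
    (hCle : ∀ a, c a ≤ zeta lam a) :
    ∀ a b, j ≤ a → a ≤ b →
      removePath T c (lam.part 1) j b ≤ removePath T c (lam.part 1) j a := by
  intro a b ha hab
  have hba : c b ≤ c a := hMon a b ha hab
  unfold removePath
  by_cases hma : a ∈ pathCols T c (lam.part 1) j
  · rw [if_pos hma]
    by_cases hmb : b ∈ pathCols T c (lam.part 1) j
    · rw [if_pos hmb]; omega
    · rw [if_neg hmb]
      rcases Nat.lt_or_ge (c b) (c a) with hlt | hge
      · omega
      · have hcb : c b = c a := by omega
        rcases Nat.eq_zero_or_pos (c b) with hz | hpos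
        · omega
        · exfalso
          apply hmb
          have : b = a + (b - a) := by omega
          rw [this]
          apply walk_mem_pathCols lam T hT c j hMon hCle (b - a) a hma
          · rw [← this]; omega
          · rw [← this]; exact hpos
  · rw [if_neg hma]
    by_cases hmb : b ∈ pathCols T c (lam.part 1) j
    · rw [if_pos hmb]; omega
    · rw [if_neg hmb]; omega

lemma removePath_le (T : ℕ → ℕ → ℕ) (c : ℕ → ℕ) (M j a : ℕ) :
    removePath T c M j a ≤ c a := by
  unfold removePath
  split <;> omega

lemma remnantIter_inv (lam : NPartition n) (T : ℕ → ℕ → ℕ) (hT : IsSSYT lam T) (j : ℕ) :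
    ∀ r, (∀ a b, j ≤ a → a ≤ b →
        remnantIter T (zeta lam) (lam.part 1) j r b ≤ remnantIter T (zeta lam) (lam.part 1) j r a)
      ∧ ∀ a, remnantIter T (zeta lam) (lam.part 1) j r a ≤ zeta lam a := by
  intro r
  induction r with
  | zero =>
    refine ⟨fun a b _ hab => zeta_antitone lam hab, fun a => le_rfl⟩
  | succ r ih =>
    constructor
    · intro a b ha hab
      exact mon_removePath lam T hT _ j ih.1 ih.2 a b ha hab
    · intro a
      exact le_trans (removePath_le T _ _ _ _) (ih.2 a)

lemma remnantIter_succ_apply (T : ℕ → ℕ → ℕ) (c0 : ℕ → ℕ) (M j r a : ℕ) :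
    remnantIter T c0 M j (r + 1) a =
      if a ∈ pathCols T (remnantIter T c0 M j r) M j
      then remnantIter T c0 M j r a - 1 else remnantIter T c0 M j r a := rfl

lemma remnantIter_le_succ (T : ℕ → ℕ → ℕ) (c0 : ℕ → ℕ) (M j r a : ℕ) :
    remnantIter T c0 M j (r + 1) a ≤ remnantIter T c0 M j r a :=
  removePath_le T _ M j a

lemma remnantIter_anti (T : ℕ → ℕ → ℕ) (c0 : ℕ → ℕ) (M j a : ℕ) :
    ∀ {r1 r2 : ℕ}, r1 ≤ r2 →
      remnantIter T c0 M j r2 a ≤ remnantIter T c0 M j r1 a := by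
  intro r1 r2 h
  induction r2 with
  | zero =>
    have : r1 = 0 := by omega
    subst this
    exact le_rfl
  | succ r ih =>
    rcases Nat.eq_or_lt_of_le h with rfl | hlt
    · exact le_rfl
    · exact le_trans (remnantIter_le_succ T c0 M j r a) (ih (by omega))

lemma remnantIter_start (T : ℕ → ℕ → ℕ) (c0 : ℕ → ℕ) (M j : ℕ) :
    ∀ r, remnantIter T c0 M j r j = c0 j - r := by
  intro r
  induction r with
  | zero => simp [remnantIter]
  | succ r ih =>
    have hmem : j ∈ pathCols T (remnantIter T c0 M j r) M j :=
      self_mem_pathColsAux T _ M M j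
    rw [remnantIter_succ_apply, if_pos hmem]
    omega

end Aux

/-- For every box `(l,k)` of `λ` and every column
`1 ≤ j ≤ l`, there is exactly one row `i ∈ [1, ζ_j]` with
`(l,k) ∈ P(T; j, i)`. -/
theorem existsUnique_scanPath_through (n : ℕ) (hn : 1 ≤ n) (lam : NPartition n)
    (T : ℕ → ℕ → ℕ) (hT : IsSSYT lam T) (l k : ℕ) (hbox : InShape lam l k)
    (j : ℕ) (hj1 : 1 ≤ j) (hjl : j ≤ l) :
    ∃! i : ℕ, (1 ≤ i ∧ i ≤ zeta lam j) ∧ InScanPath lam T j i l k := by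
  classical
  set M := lam.part 1 with hM
  set Z := zeta lam j with hZ
  set c : ℕ → ℕ → ℕ := fun r => remnantIter T (zeta lam) M j r with hc
  -- basic facts
  have hk1 : 1 ≤ k := hbox.2.1
  have hkzl : k ≤ zeta lam l := le_zeta_of_inShape lam hbox
  have hkZ : k ≤ Z := le_trans hkzl (zeta_antitone lam hjl)
  have hcj : ∀ r, c r j = Z - r := fun r => remnantIter_start T (zeta lam) M j r
  have hinv := remnantIter_inv lam T hT j
  have hcZl : c Z l = 0 := by
    have h1 : c Z l ≤ c Z j := (hinv Z).1 j l le_rfl hjl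
    rw [hcj] at h1
    omega
  have hstep : ∀ r a, c (r + 1) a =
      if a ∈ pathCols T (c r) M j then c r a - 1 else c r a :=
    fun r a => remnantIter_succ_apply T (zeta lam) M j r a
  have hanti : ∀ a {r1 r2 : ℕ}, r1 ≤ r2 → c r2 a ≤ c r1 a :=
    fun a {r1 r2} h => remnantIter_anti T (zeta lam) M j a h
  -- uniqueness at the level of removal steps
  have huniq : ∀ s t : ℕ, l ∈ pathCols T (c s) M j → c s l = k →
      l ∈ pathCols T (c t) M j → c t l = k → s = t := by
    intro s t hs hks ht hkt
    by_contra hne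
    rcases Nat.lt_or_ge s t with hlt | hge
    · have h1 : c (s + 1) l = k - 1 := by rw [hstep, if_pos hs, hks]
      have h2 : c t l ≤ c (s + 1) l := hanti l (by omega)
      omega
    · have hlt : t < s := by omega
      have h1 : c (t + 1) l = k - 1 := by rw [hstep, if_pos ht, hkt]
      have h2 : c s l ≤ c (t + 1) l := hanti l (by omega)
      omega
  -- existence of the removal step
  have hex : ∃ r : ℕ, r < Z ∧ l ∈ pathCols T (c r) M j ∧ c r l = k := by
    have hPex : ∃ r, c r l < k := ⟨Z, by omega⟩
    set r0 := Nat.find hPex with hr0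
    have hr0spec : c r0 l < k := Nat.find_spec hPex
    have hr0pos : 1 ≤ r0 := by
      rcases Nat.eq_zero_or_pos r0 with h0 | h1
      · exfalso
        have : c 0 l = zeta lam l := rfl
        rw [h0] at hr0spec
        omega
      · exact h1
    set r := r0 - 1 with hr
    have hrmin : ¬ c r l < k := Nat.find_min hPex (by omega)
    have hr1 : r + 1 = r0 := by omega
    have hmem : l ∈ pathCols T (c r) M j := by
      by_contra hmem
      have := hstep r l
      rw [if_neg hmem] at this
      rw [hr1] at this
      omega
    have hkr : c r l = k := by
      have := hstep r l
      rw [if_pos hmem, hr1] at this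
      omega
    have hrZ : r < Z := by
      by_contra hge
      push_neg at hge
      have : c r l ≤ c Z l := hanti l hge
      omega
    exact ⟨r, hrZ, hmem, hkr⟩
  obtain ⟨r, hrZ, hmem, hkr⟩ := hex
  -- translate to row indices
  refine ⟨Z - r, ⟨⟨by omega, by omega⟩, ?_⟩, ?_⟩
  · have hrem : remnant lam T j (Z - r) = c r := by
      show remnantIter T (zeta lam) (lam.part 1) j (zeta lam j - (Z - r)) = c r
      have : zeta lam j - (Z - r) = r := by omega
      rw [this]
    constructor
    · show l ∈ pathCols T (remnant lam T j (Z - r)) (lam.part 1) j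
      rw [hrem]
      exact hmem
    · rw [hrem, hkr]
  · rintro i' ⟨⟨hi'1, hi'2⟩, hmem', hkr'⟩
    have hmem'' : l ∈ pathCols T (c (Z - i')) M j := hmem'
    have hkr'' : c (Z - i') l = k := hkr'.symm
    have := huniq (Z - i') r hmem'' hkr'' hmem hkr
    omega

end KeyPoly
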